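/- For every natural number n, (n!·(n+2)!) divides 2·(2n)!·3^n. -/
import Mathlib

open Nat

lemma catalan_rec (n : ℕ) : (n + 2) * catalan (n + 1) = 2 * (2 * n + 1) * catalan n := by
  have h := Nat.succ_mul_centralBinom_succ n
  have h2 := succ_mul_catalan_eq_centralBinom n
  have h3 := succ_mul_catalan_eq_centralBinom (n + 1)
  have key : (n + 1) * ((n + 2) * catalan (n + 1)) = (n + 1) * (2 * (2 * n + 1) * catalan n) := by
    calc (n + 1) * ((n + 2) * catalan (n + 1)) = (n + 1) * ((n + 1 + 1) * catalan (n + 1)) := rfl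
      _ = (n + 1) * centralBinom (n + 1) := by rw [h3]
      _ = 2 * (2 * n + 1) * ((n + 1) * catalan n) := by rw [h, h2]
      _ = (n + 1) * (2 * (2 * n + 1) * catalan n) := by ring
  exact Nat.eq_of_mul_eq_mul_left (by omega) key

lemma six_dvd (n : ℕ) : (n + 2) ∣ 6 * catalan n := by
  have h := catalan_rec n
  have hle : catalan (n + 1) ≤ 4 * catalan n := by
    have : (n + 2) * catalan (n + 1) ≤ (n + 2) * (4 * catalan n) := by nlinarith
    exact Nat.le_of_mul_le_mul_left this (by omega)
  refine ⟨4 * catalan n - catalan (n + 1), ?_⟩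
  zify [hle]
  push_cast at h
  linarith

/-- Tutte's formula integrality: for every natural number `n`,
`n! * (n+2)!` divides `2 * (2n)! * 3^n`. -/
theorem tutte_integrality (n : ℕ) :
    (Nat.factorial n * Nat.factorial (n + 2)) ∣ 2 * Nat.factorial (2 * n) * 3 ^ n := by
  rcases n with _ | m
  · decide
  set n := m + 1 with hn
  obtain ⟨k, hk⟩ := six_dvd n
  have e1 : centralBinom n * n ! * n ! = (2 * n)! := by
    have := Nat.choose_mul_factorial_mul_factorial (show n ≤ 2 * n by omega)
    simpa [Nat.centralBinom, two_mul, Nat.add_sub_cancel] using this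
  have e2 := succ_mul_catalan_eq_centralBinom n
  refine ⟨3 ^ m * k, ?_⟩
  have hfac : (n + 2)! = (n + 2) * (n + 1) * n ! := by
    rw [Nat.factorial_succ, Nat.factorial_succ]; ring
  calc 2 * (2 * n)! * 3 ^ n
      = 2 * (centralBinom n * n ! * n !) * 3 ^ n := by rw [e1]
    _ = 2 * ((n + 1) * catalan n * n ! * n !) * (3 ^ m * 3) := by
        rw [e2, hn, pow_succ]
    _ = (n + 1) * n ! * n ! * 3 ^ m * (6 * catalan n) := by ring
    _ = (n + 1) * n ! * n ! * 3 ^ m * ((n + 2) * k) := by rw [hk]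
    _ = n ! * ((n + 2) * (n + 1) * n !) * (3 ^ m * k) := by ring
    _ = n ! * (n + 2)! * (3 ^ m * k) := by rw [hfac]
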